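/- Let (Ω, 𝒜) be a measurable space, let m ⊆ 𝒜 be a sub-σ-algebra, let P₁ and P₂ be probability measures on (Ω, 𝒜) that agree on m, and let f : Ω → ℝ be integrable with respect to both P₁ and P₂. Then there exists a probability measure P̄ on (Ω, 𝒜) that agrees with P₁ (and P₂) on m, such that f is P̄-integrable and E^{P̄}[f | m] ≥ max( E^{P₁}[f | m], E^{P₂}[f | m] ), P̄-almost everywhere. -/

import Mathlib

open MeasureTheory Set

/-! Let `B := {P₂[f|m] ≤ P₁[f|m]}` and `P̄ := P₁|_B + P₂|_Bᶜ`. Because `B` is `m`-measurable, the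
defining identities of `P₁[f|m]` on the `m`-sets `s ∩ B` and of `P₂[f|m]` on `s ∩ Bᶜ` add up to
show that `P̄[f|m]` is `P₁[f|m]` on `B` and `P₂[f|m]` on `Bᶜ`, i.e. the maximum of the two. -/

namespace MeasureTheory

variable {Ω : Type*} {m mΩ : MeasurableSpace Ω} {μ ν : Measure Ω} {B s : Set Ω} {g : Ω → ℝ}

theorem restrict_add_restrict_compl_apply_of_eq_on (hm : m ≤ mΩ) (hB : MeasurableSet[m] B)
    (hagree : ∀ s, MeasurableSet[m] s → μ s = ν s) (hs : MeasurableSet[m] s) :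
    (μ.restrict B + ν.restrict Bᶜ) s = μ s := by
  rw [Measure.add_apply, Measure.restrict_apply (hm s hs), Measure.restrict_apply (hm s hs),
    ← hagree _ (hs.inter hB.compl), ← sdiff_eq, measure_inter_add_sdiff s (hm B hB)]

theorem setIntegral_restrict_add_restrict_compl (hs : MeasurableSet s)
    (hμ : IntegrableOn g B μ) (hν : IntegrableOn g Bᶜ ν) :
    ∫ x in s, g x ∂(μ.restrict B + ν.restrict Bᶜ) =
      ∫ x in s ∩ B, g x ∂μ + ∫ x in s ∩ Bᶜ, g x ∂ν := by
  rw [Measure.restrict_add, Measure.restrict_restrict hs, Measure.restrict_restrict hs]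
  exact integral_add_measure (hμ.mono_set inter_subset_right) (hν.mono_set inter_subset_right)

theorem condExp_restrict_add_restrict_compl [IsFiniteMeasure μ] [IsFiniteMeasure ν]
    [∀ ω, Decidable (ω ∈ B)] (hm : m ≤ mΩ) (hB : MeasurableSet[m] B) {f : Ω → ℝ}
    (hfμ : Integrable f μ) (hfν : Integrable f ν) :
    (μ.restrict B + ν.restrict Bᶜ)[f|m] =ᵐ[μ.restrict B + ν.restrict Bᶜ]
      B.piecewise (μ[f|m]) (ν[f|m]) := by
  have hBΩ : MeasurableSet B := hm B hB
  have hpiece_B : IntegrableOn (B.piecewise (μ[f|m]) (ν[f|m])) B μ :=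
    integrable_condExp.integrableOn.congr_fun (piecewise_eqOn B _ _).symm hBΩ
  have hpiece_Bc : IntegrableOn (B.piecewise (μ[f|m]) (ν[f|m])) Bᶜ ν :=
    integrable_condExp.integrableOn.congr_fun (piecewise_eqOn_compl B _ _).symm hBΩ.compl
  refine (ae_eq_condExp_of_forall_setIntegral_eq hm
    (integrable_add_measure.2 ⟨hfμ.integrableOn, hfν.integrableOn⟩)
    (fun _ _ _ ↦ (integrable_add_measure.2 ⟨hpiece_B, hpiece_Bc⟩).integrableOn)
    (fun s hs _ ↦ ?_)
    (stronglyMeasurable_condExp.piecewise hB stronglyMeasurable_condExp).aestronglyMeasurable).symm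
  have hsΩ : MeasurableSet s := hm s hs
  rw [setIntegral_restrict_add_restrict_compl hsΩ hpiece_B hpiece_Bc,
    setIntegral_restrict_add_restrict_compl hsΩ hfμ.integrableOn hfν.integrableOn,
    setIntegral_congr_fun (hsΩ.inter hBΩ) ((piecewise_eqOn B _ _).mono inter_subset_right),
    setIntegral_congr_fun (hsΩ.inter hBΩ.compl)
      ((piecewise_eqOn_compl B _ _).mono inter_subset_right),
    setIntegral_condExp hm hfμ (hs.inter hB), setIntegral_condExp hm hfν (hs.inter hB.compl)]

end MeasureTheory

/-- Upward directedness (Step 3 of the proof of Theorem 2.4 of the paper): given two probability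
measures agreeing on a sub-σ-algebra `m` and a function integrable with respect to both, there is
a probability measure agreeing with them on `m` whose conditional expectation given `m` dominates
the maximum of the two conditional expectations. -/
theorem exists_pasting_condexp_ge_max
    {Ω : Type*} {m mΩ : MeasurableSpace Ω} (hm : m ≤ mΩ)
    (P₁ P₂ : @Measure Ω mΩ) [IsProbabilityMeasure P₁] [IsProbabilityMeasure P₂]
    (hagree : ∀ s : Set Ω, MeasurableSet[m] s → P₁ s = P₂ s)
    (f : Ω → ℝ) (hf₁ : Integrable f P₁) (hf₂ : Integrable f P₂) :
    ∃ Pb : @Measure Ω mΩ, IsProbabilityMeasure Pb ∧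
      (∀ s : Set Ω, MeasurableSet[m] s → Pb s = P₁ s) ∧
      Integrable f Pb ∧
      ∀ᵐ ω ∂Pb, max ((P₁[f|m]) ω) ((P₂[f|m]) ω) ≤ (Pb[f|m]) ω := by
  classical
  set B := {ω | (P₂[f|m]) ω ≤ (P₁[f|m]) ω}
  have hB : MeasurableSet[m] B :=
    measurableSet_le stronglyMeasurable_condExp.measurable stronglyMeasurable_condExp.measurable
  have hPb : ∀ s, MeasurableSet[m] s → (P₁.restrict B + P₂.restrict Bᶜ) s = P₁ s :=
    fun _ ↦ restrict_add_restrict_compl_apply_of_eq_on hm hB hagree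
  refine ⟨P₁.restrict B + P₂.restrict Bᶜ,
    ⟨by rw [hPb univ MeasurableSet.univ, measure_univ]⟩, hPb,
    integrable_add_measure.2 ⟨hf₁.integrableOn, hf₂.integrableOn⟩, ?_⟩
  filter_upwards [condExp_restrict_add_restrict_compl hm hB hf₁ hf₂] with ω hω
  rw [hω]
  by_cases hωB : ω ∈ B
  · rw [piecewise_eq_of_mem _ _ _ hωB]
    exact max_le le_rfl hωB
  · rw [piecewise_eq_of_notMem _ _ _ hωB]
    exact max_le (not_le.1 hωB).le le_rfl
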